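/- Let K ⊆ ℝ^d be a compact set that is rectifiably pathwise connected, i.e., any two points of K can be joined by a rectifiable path in K. If f : K → ℝ admits the zero function as a derivative on K, then f is constant on K. -/

import Mathlib

/-!
Along a rectifiable path `γ : [a, b] → K`, the vanishing derivative gives, for every `ε > 0`,
`|f (γ t) - f (γ c)| ≤ ε (V t - V c)` for `t` slightly to the right of `c`, where `V` is the
variation of `γ` from `a`, because `‖γ t - γ c‖ ≤ V t - V c`. A supremum argument propagates this
local bound to `|f (γ b) - f (γ a)| ≤ ε V b`, and `ε → 0`.
-/

open Set Filter Topology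

/-- `df` is a (not necessarily unique) derivative of `f` on the set `K`:
at every `x ∈ K`, `(f y - f x - ⟪df x, y - x⟫)/‖y - x‖ → 0` as `y → x` within `K`. -/
def IsDerivOn {d : ℕ} (K : Set (EuclideanSpace ℝ (Fin d)))
    (f : EuclideanSpace ℝ (Fin d) → ℝ)
    (df : EuclideanSpace ℝ (Fin d) → EuclideanSpace ℝ (Fin d)) : Prop :=
  ∀ x ∈ K, Filter.Tendsto
    (fun y => (f y - f x - (inner ℝ (df x) (y - x) : ℝ)) / ‖y - x‖)
    (𝓝[K \ {x}] x) (𝓝 0)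

theorem variationOnFromTo.dist_le_sub_of_le {α E : Type*} [LinearOrder α] [PseudoMetricSpace E]
    {f : α → E} {s : Set α} (hf : LocallyBoundedVariationOn f s) {a b c : α}
    (as : a ∈ s) (bs : b ∈ s) (cs : c ∈ s) (bc : b ≤ c) :
    dist (f b) (f c) ≤ variationOnFromTo f s a c - variationOnFromTo f s a b := calc
  _ ≤ variationOnFromTo f s b c := by
    rw [variationOnFromTo.eq_of_le f s bc, dist_edist]
    exact ENNReal.toReal_mono (hf b c bs cs)
      (eVariationOn.edist_le f ⟨bs, le_rfl, bc⟩ ⟨cs, bc, le_rfl⟩)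
  _ = variationOnFromTo f s a c - variationOnFromTo f s a b := by
    rw [← variationOnFromTo.add hf as bs cs, add_sub_cancel_left]

theorem abs_sub_le_sub_of_eventually_abs_sub_le {g v : ℝ → ℝ} {a b : ℝ} (hab : a ≤ b)
    (hg : ContinuousOn g (Icc a b)) (hv : MonotoneOn v (Icc a b))
    (hloc : ∀ c ∈ Ico a b, ∀ᶠ t in 𝓝[>] c, |g t - g c| ≤ v t - v c) :
    |g b - g a| ≤ v b - v a := by
  set S := {t ∈ Icc a b | |g t - g a| ≤ v t - v a}
  have haS : a ∈ S := ⟨left_mem_Icc.2 hab, by simp⟩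
  have hSbdd : BddAbove S := bddAbove_Icc.mono fun t ht => ht.1
  set c := sSup S
  have hc : c ∈ Icc a b := ⟨le_csSup hSbdd haS, csSup_le ⟨a, haS⟩ fun t ht => ht.1.2⟩
  -- `S` need not be closed, but it lies in the closed set where `|g t - g a| ≤ v c - v a`.
  have hcS : c ∈ S := by
    have hclosed : IsClosed (Icc a b ∩ (fun t => |g t - g a|) ⁻¹' Iic (v c - v a)) :=
      ((hg.sub continuousOn_const).abs).preimage_isClosed_of_isClosed isClosed_Icc isClosed_Iic
    have hsub : S ⊆ Icc a b ∩ (fun t => |g t - g a|) ⁻¹' Iic (v c - v a) :=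
      fun t ht => ⟨ht.1, ht.2.trans (by gcongr; exact hv ht.1 hc (le_csSup hSbdd ht))⟩
    exact ⟨hc, (hclosed.closure_subset_iff.2 hsub (csSup_mem_closure ⟨a, haS⟩ hSbdd)).2⟩
  obtain hcb | hcb := hc.2.eq_or_lt
  · exact hcb ▸ hcS.2
  obtain ⟨t, ht, htb⟩ :=
    ((hloc c ⟨hc.1, hcb⟩).and (Ioc_mem_nhdsGT hcb)).exists
  have htS : t ∈ S := ⟨⟨hc.1.trans htb.1.le, htb.2⟩, calc
    |g t - g a| ≤ |g t - g c| + |g c - g a| := abs_sub_le _ _ _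
    _ ≤ v t - v a := by linarith [hcS.2]⟩
  exact absurd (le_csSup hSbdd htS) htb.1.not_ge

theorem eq_of_forall_eventually_abs_sub_le_mul {g v : ℝ → ℝ} {a b : ℝ} (hab : a ≤ b)
    (hg : ContinuousOn g (Icc a b)) (hv : MonotoneOn v (Icc a b))
    (hloc : ∀ ε > 0, ∀ c ∈ Ico a b, ∀ᶠ t in 𝓝[>] c, |g t - g c| ≤ ε * (v t - v c)) :
    g b = g a := by
  refine eq_of_forall_dist_le fun ε hε => ?_
  set D := v b - v a
  have hD : 0 ≤ D := sub_nonneg.2 (hv (left_mem_Icc.2 hab) (right_mem_Icc.2 hab) hab)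
  have hε' : 0 < ε / (D + 1) := by positivity
  have hbound := abs_sub_le_sub_of_eventually_abs_sub_le (v := fun t => ε / (D + 1) * v t) hab hg
    (fun s hs t ht hst => mul_le_mul_of_nonneg_left (hv hs ht hst) hε'.le)
    (fun c hc => (hloc _ hε' c hc).mono fun t ht => by rwa [← mul_sub])
  calc dist (g b) (g a) = |g b - g a| := Real.dist_eq _ _
    _ ≤ ε / (D + 1) * D := by rwa [← mul_sub] at hbound
    _ ≤ ε := by
      rw [div_mul_eq_mul_div, div_le_iff₀ (by positivity)]
      nlinarith

namespace IsDerivOn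

variable {d : ℕ} {K : Set (EuclideanSpace ℝ (Fin d))} {f : EuclideanSpace ℝ (Fin d) → ℝ}
  {df : EuclideanSpace ℝ (Fin d) → EuclideanSpace ℝ (Fin d)}

theorem isLittleO (h : IsDerivOn K f df) {x : EuclideanSpace ℝ (Fin d)} (hx : x ∈ K) :
    (fun y => f y - f x - inner ℝ (df x) (y - x)) =o[𝓝[K] x] fun y => y - x := by
  rw [← insert_eq_of_mem hx, ← insert_sdiff_singleton, Asymptotics.isLittleO_insert (by simp),
    ← Asymptotics.isLittleO_norm_right, Asymptotics.isLittleO_iff_tendsto']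
  · exact h x hx
  · filter_upwards [self_mem_nhdsWithin] with y hy hy0
    exact absurd (sub_eq_zero.1 (norm_eq_zero.1 hy0)) hy.2

theorem continuousOn (h : IsDerivOn K f df) : ContinuousOn f K := by
  intro x hx
  have hsub : Tendsto (fun y => y - x) (𝓝[K] x) (𝓝 0) :=
    tendsto_sub_nhds_zero_iff.2 nhdsWithin_le_nhds
  have hlin : Tendsto (fun y => inner ℝ (df x) (y - x)) (𝓝[K] x) (𝓝 0) := by
    simpa using (tendsto_const_nhds (x := df x)).inner hsub
  simpa [ContinuousWithinAt] using (((h.isLittleO hx).trans_tendsto hsub).add hlin).add_const (f x)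

theorem eventually_abs_comp_sub_le (hdf : IsDerivOn K f fun _ => 0)
    {γ : ℝ → EuclideanSpace ℝ (Fin d)} {a b : ℝ} (hγc : ContinuousOn γ (Icc a b))
    (hγK : MapsTo γ (Icc a b) K) (hγ : LocallyBoundedVariationOn γ (Icc a b))
    {ε : ℝ} (hε : 0 < ε) {c : ℝ} (hc : c ∈ Ico a b) :
    ∀ᶠ t in 𝓝[>] c, |f (γ t) - f (γ c)| ≤
      ε * (variationOnFromTo γ (Icc a b) a t - variationOnFromTo γ (Icc a b) a c) := by
  have hcI : c ∈ Icc a b := Ico_subset_Icc_self hc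
  have hfγ : (fun t => f (γ t) - f (γ c)) =o[𝓝[Icc a b] c] fun t => γ t - γ c := by
    simpa [Function.comp_def] using
      (hdf.isLittleO (hγK hcI)).comp_tendsto ((hγc c hcI).tendsto_nhdsWithin hγK)
  have hIcc : Icc a b ∈ 𝓝[>] c :=
    ordConnected_Icc.mem_nhdsGT hcI (right_mem_Icc.2 (hc.1.trans hc.2.le)) hc.2
  filter_upwards [nhdsWithin_le_of_mem hIcc (hfγ.def hε), hIcc, self_mem_nhdsWithin]
    with t ht htI hct
  calc |f (γ t) - f (γ c)| ≤ ε * ‖γ t - γ c‖ := by simpa using ht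
    _ ≤ _ := by
      gcongr
      rw [← dist_eq_norm, dist_comm]
      exact variationOnFromTo.dist_le_sub_of_le hγ (left_mem_Icc.2 (hc.1.trans hc.2.le))
        hcI htI hct.le

end IsDerivOn

theorem constant_of_zero_deriv {d : ℕ} (K : Set (EuclideanSpace ℝ (Fin d)))
    (hconn : ∀ x ∈ K, ∀ y ∈ K, ∃ (a b : ℝ) (γ : ℝ → EuclideanSpace ℝ (Fin d)),
      a ≤ b ∧ ContinuousOn γ (Icc a b) ∧ MapsTo γ (Icc a b) K ∧
      γ a = x ∧ γ b = y ∧ eVariationOn γ (Icc a b) ≠ ⊤)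
    (f : EuclideanSpace ℝ (Fin d) → ℝ)
    (hdf : IsDerivOn K f (fun _ => 0)) :
    ∀ x ∈ K, ∀ y ∈ K, f x = f y := by
  intro x hx y hy
  obtain ⟨a, b, γ, hab, hγc, hγK, rfl, rfl, hγ⟩ := hconn x hx y hy
  have hγ' : LocallyBoundedVariationOn γ (Icc a b) :=
    BoundedVariationOn.locallyBoundedVariationOn hγ
  refine (eq_of_forall_eventually_abs_sub_le_mul (g := f ∘ γ) hab (hdf.continuousOn.comp hγc hγK)
    (variationOnFromTo.monotoneOn hγ' (left_mem_Icc.2 hab))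
    fun ε hε c hc => hdf.eventually_abs_comp_sub_le hγc hγK hγ' hε hc).symm
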